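/- The modulus of the theta function is invariant under the element γ₂ = ([[1,2],[0,1]]; 0): for every measurable f : ℝ^k → ℂ with κ_η(f) < ∞ for some η > k, every z ∈ ℍ, φ ∈ ℝ, and ξ₁, ξ₂ ∈ ℝ^k, one has |Θ_f(z + 2, φ; (ξ₁ + 2ξ₂, ξ₂))| = |Θ_f(z, φ; (ξ₁, ξ₂))|. -/

import Mathlib

open scoped RealInnerProductSpace
open MeasureTheory
open scoped ENNReal Classical

/-- ℝ^k as a Euclidean space. -/
abbrev E (k : ℕ) := EuclideanSpace ℝ (Fin k)

/-- `e(t) = exp(2πit)`. -/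
noncomputable def e (t : ℝ) : ℂ := Complex.exp (2 * Real.pi * Complex.I * t)

/-- `f_φ := R(k_φ)f`: equal to `f` when `φ ≡ 0 (mod 2π)`, to `w ↦ f(−w)` when
`φ ≡ π (mod 2π)`, and given by the oscillatory integral otherwise. -/
noncomputable def fphi {k : ℕ} (f : E k → ℂ) (φ : ℝ) : E k → ℂ :=
  fun w =>
    if ∃ m : ℤ, φ = 2 * Real.pi * m then f w
    else if ∃ m : ℤ, φ = Real.pi + 2 * Real.pi * m then f (-w)
    else ((|Real.sin φ| ^ (-(k : ℝ) / 2) : ℝ) : ℂ) *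
      ∫ v : E k,
        e (((1 / 2) * (‖w‖ ^ 2 + ‖v‖ ^ 2) * Real.cos φ - ⟪w, v⟫) / Real.sin φ) * f v

/-- `κ_η(f) = sup_{w,φ} (1+‖w‖²)^{η/2} |f_φ(w)|` (valued in `ℝ≥0∞`). -/
noncomputable def kappa {k : ℕ} (η : ℝ) (f : E k → ℂ) : ℝ≥0∞ :=
  ⨆ (w : E k) (φ : ℝ),
    ENNReal.ofReal ((1 + ‖w‖ ^ 2) ^ (η / 2) * ‖fphi f φ w‖)

/-- The lattice point `n ∈ ℤ^k` viewed as a vector in ℝ^k. -/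
noncomputable def intVec {k : ℕ} (n : Fin k → ℤ) : E k :=
  (EuclideanSpace.equiv (Fin k) ℝ).symm (fun i => (n i : ℝ))

/-- The Jacobi theta function
`Θ_f(z, φ; ξ) = y^{k/4} Σ_{n ∈ ℤ^k} f_φ((n − ξ₂)√y) e(½‖n − ξ₂‖² x + n·ξ₁)`,
where `z = x + iy`. -/
noncomputable def Theta {k : ℕ} (f : E k → ℂ) (z : ℂ) (φ : ℝ) (ξ : E k × E k) : ℂ :=
  ((z.im ^ ((k : ℝ) / 4) : ℝ) : ℂ) *
    ∑' n : Fin k → ℤ,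
      fphi f φ (Real.sqrt z.im • (intVec n - ξ.2)) *
        e ((1 / 2) * ‖intVec n - ξ.2‖ ^ 2 * z.re + ⟪intVec n, ξ.1⟫)

/-!
Replacing `x` by `x + 2` and `ξ₁` by `ξ₁ + 2ξ₂` multiplies the `n`-th summand of `Θ_f` by
`e(‖n − ξ₂‖² + 2 n·ξ₂) = e(‖n‖² + ‖ξ₂‖²)`. Since `‖n‖²` is an integer for `n ∈ ℤ^k`, this factor
is the constant `e(‖ξ₂‖²)` of modulus one, and it comes out of the sum.
-/

lemma e_add (a b : ℝ) : e (a + b) = e a * e b := by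
  rw [e, e, e, ← Complex.exp_add]
  push_cast
  ring_nf

lemma e_intCast (m : ℤ) : e m = 1 := by
  rw [e, ← Complex.exp_int_mul_two_pi_mul_I m]
  push_cast
  ring_nf

lemma e_add_intCast (t : ℝ) (m : ℤ) : e (t + m) = e t := by
  rw [e_add, e_intCast, mul_one]

lemma norm_e (t : ℝ) : ‖e t‖ = 1 := by
  rw [e, show 2 * (Real.pi : ℂ) * Complex.I * t = ((2 * Real.pi * t : ℝ) : ℂ) * Complex.I by
    push_cast; ring]
  exact Complex.norm_exp_ofReal_mul_I _

lemma norm_intVec_sq {k : ℕ} (n : Fin k → ℤ) :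
    ‖intVec n‖ ^ 2 = ((∑ i, n i ^ 2 : ℤ) : ℝ) := by
  rw [EuclideanSpace.real_norm_sq_eq]
  push_cast
  rfl

lemma e_theta_phase_shift {k : ℕ} (n : Fin k → ℤ) (ξ₁ ξ₂ : E k) (x : ℝ) :
    e ((1 / 2) * ‖intVec n - ξ₂‖ ^ 2 * (x + 2) + ⟪intVec n, ξ₁ + (2 : ℝ) • ξ₂⟫) =
      e (‖ξ₂‖ ^ 2) * e ((1 / 2) * ‖intVec n - ξ₂‖ ^ 2 * x + ⟪intVec n, ξ₁⟫) := by
  have phase : (1 / 2) * ‖intVec n - ξ₂‖ ^ 2 * (x + 2) + ⟪intVec n, ξ₁ + (2 : ℝ) • ξ₂⟫ =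
      (‖ξ₂‖ ^ 2 + ((1 / 2) * ‖intVec n - ξ₂‖ ^ 2 * x + ⟪intVec n, ξ₁⟫)) +
        ((∑ i, n i ^ 2 : ℤ) : ℝ) := by
    rw [inner_add_right, real_inner_smul_right, norm_sub_sq_real, ← norm_intVec_sq]
    ring
  rw [phase, e_add_intCast, e_add]

lemma Theta_add_two {k : ℕ} (f : E k → ℂ) (z : ℂ) (φ : ℝ) (ξ₁ ξ₂ : E k) :
    Theta f (z + 2) φ (ξ₁ + (2 : ℝ) • ξ₂, ξ₂) = e (‖ξ₂‖ ^ 2) * Theta f z φ (ξ₁, ξ₂) := by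
  simp only [Theta, Complex.add_im, Complex.add_re, Complex.im_ofNat, Complex.re_ofNat, add_zero,
    e_theta_phase_shift, mul_left_comm _ (e _), tsum_mul_left]

theorem theta_invariance_gamma2_general {k : ℕ}
    (f : E k → ℂ)
    (z : ℂ) (φ : ℝ) (ξ₁ ξ₂ : E k) :
    ‖Theta f (z + 2) φ (ξ₁ + (2 : ℝ) • ξ₂, ξ₂)‖ =
      ‖Theta f z φ (ξ₁, ξ₂)‖ := by
  rw [Theta_add_two, norm_mul, norm_e, one_mul]

/-- `|Θ_f|` is invariant under `γ₂ = ([[1,2],[0,1]]; 0)`: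
`|Θ_f(z + 2, φ; (ξ₁ + 2ξ₂, ξ₂))| = |Θ_f(z, φ; (ξ₁, ξ₂))|`. -/
theorem theta_invariance_gamma2 {k : ℕ} (hk : 0 < k)
    (f : E k → ℂ) (hf : Measurable f)
    (η : ℝ) (hη : (k : ℝ) < η) (hκ : kappa η f < ⊤)
    (z : ℂ) (hz : 0 < z.im) (φ : ℝ) (ξ₁ ξ₂ : E k) :
    ‖Theta f (z + 2) φ (ξ₁ + (2 : ℝ) • ξ₂, ξ₂)‖ =
      ‖Theta f z φ (ξ₁, ξ₂)‖ :=
  theta_invariance_gamma2_general f z φ ξ₁ ξ₂
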